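/- Let f and g be elements of the square F² of the free bicommutative algebra F of countable rank, with images f₁, g₁ in G². If wt(f₁) ≼ wt(g₁) in the divisibility-with-embedding order, then there exists an element h in the T-ideal of F generated by f whose image h₁ in G² satisfies wt(h₁) = wt(g₁). -/

import Mathlib

open MvPolynomial

variable (K : Type) [Field K] (ι : Type)

/-- The ideal of the polynomial ring `K[Y,Z]` (variables `y_i = X (inl i)`,
`z_j = X (inr j)`) generated by the products `y_i * z_j`; its underlying `K`-vector
space is spanned by the monomials `Y^α Z^β` with `|α| > 0` and `|β| > 0`. -/
noncomputable def Vid : Ideal (MvPolynomial (ι ⊕ ι) K) :=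
  Ideal.span {p | ∃ i j, p = X (Sum.inl i) * X (Sum.inr j)}

/-- The linear polynomial `∑ a_i y_i`. -/
noncomputable def Yp (a : ι →₀ K) : MvPolynomial (ι ⊕ ι) K :=
  a.sum fun i c => C c * X (Sum.inl i)

/-- The linear polynomial `∑ b_j z_j`. -/
noncomputable def Zp (b : ι →₀ K) : MvPolynomial (ι ⊕ ι) K :=
  b.sum fun j c => C c * X (Sum.inr j)

/-- The model `G` of the free bicommutative algebra with generators `x_i` indexed
by `ι`: its elements are pairs (linear part in the `x_i`'s, element of the span of
the `v_{α,β} = Y^α Z^β`). -/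
abbrev GA : Type := (ι →₀ K) × (Vid K ι)

lemma mul_mem_Vid (a b : ι →₀ K) (p q : MvPolynomial (ι ⊕ ι) K)
    (hp : p ∈ Vid K ι) (hq : q ∈ Vid K ι) :
    (Yp K ι a + p) * (Zp K ι b + q) ∈ Vid K ι := by
  have hYZ : Yp K ι a * Zp K ι b ∈ Vid K ι := by
    rw [Yp, Zp, Finsupp.sum, Finsupp.sum, Finset.sum_mul_sum]
    refine Submodule.sum_mem _ fun i _ => Submodule.sum_mem _ fun j _ => ?_
    have h : (C (a i) * X (Sum.inl i)) * (C (b j) * X (Sum.inr j))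
        = (C (a i) * C (b j)) * (X (Sum.inl i) * X (Sum.inr j) :
          MvPolynomial (ι ⊕ ι) K) := by ring
    rw [h]
    exact Ideal.mul_mem_left _ _ (Ideal.subset_span ⟨i, j, rfl⟩)
  have e : (Yp K ι a + p) * (Zp K ι b + q)
      = Yp K ι a * Zp K ι b + (Yp K ι a * q + (p * Zp K ι b + p * q)) := by ring
  rw [e]
  exact add_mem hYZ (add_mem (Ideal.mul_mem_left _ _ hq)
    (add_mem (Ideal.mul_mem_right _ _ hp) (Ideal.mul_mem_left _ _ hq)))

/-- The multiplication of `G`: `x_i ∘ x_j = y_i z_j`, `x_i ∘ v_{α,β} = v_{α+ε_i,β}`,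
`v_{α,β} ∘ x_j = v_{α,β+ε_j}`, `v_{α,β} ∘ v_{γ,δ} = v_{α+γ,β+δ}`, extended bilinearly. -/
noncomputable instance : Mul (GA K ι) :=
  ⟨fun u v => (0, ⟨(Yp K ι u.1 + (u.2 : MvPolynomial (ι ⊕ ι) K)) *
      (Zp K ι v.1 + (v.2 : MvPolynomial (ι ⊕ ι) K)),
    mul_mem_Vid K ι u.1 v.1 _ _ u.2.2 v.2.2⟩)⟩

/-- The generator `x_i` of `G`. -/
noncomputable def xE (i : ι) : GA K ι := (Finsupp.single i 1, 0)

/-- The basis element `v_{α,β}` of `G²`, as a predicate on elements of `G`. -/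
def IsVElem (w : GA K ι) (α β : ι →₀ ℕ) : Prop :=
  w.1 = 0 ∧ (w.2 : MvPolynomial (ι ⊕ ι) K) = monomial (Finsupp.sumElim α β) 1

/-- The square `G²` of `G`: the linear span of all products. -/
noncomputable def Gsq : Submodule K (GA K ι) := Submodule.span K {w | ∃ u v : GA K ι, w = u * v}

/-- Two-sided ideals of the (nonassociative) algebra `G`: `K`-subspaces absorbing
multiplication on both sides. -/
def IsTwoSidedIdeal (I : Submodule K (GA K ι)) : Prop :=
  ∀ (a : GA K ι), ∀ x ∈ I, a * x ∈ I ∧ x * a ∈ I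

/-- Exponent vectors of monomials of `K[y_1, y_2, …, z_1, z_2, …]`. -/
abbrev Mon : Type := (ℕ ⊕ ℕ) →₀ ℕ

/-- The reflected lexicographic order on monomials: first compare the `y`-exponents
from the largest index downwards, then the `z`-exponents. -/
def MonLT (u v : Mon) : Prop :=
  (∃ i, u (Sum.inl i) < v (Sum.inl i) ∧ ∀ j, i < j → u (Sum.inl j) = v (Sum.inl j)) ∨
  ((∀ i, u (Sum.inl i) = v (Sum.inl i)) ∧
    ∃ i, u (Sum.inr i) < v (Sum.inr i) ∧ ∀ j, i < j → u (Sum.inr j) = v (Sum.inr j))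

def MonLE (u v : Mon) : Prop := MonLT u v ∨ u = v

/-- `μ ≼ ν` iff some strictly increasing renaming `y_i ↦ y_{φ(i)}, z_i ↦ z_{φ(i)}`
of the monomial `μ` divides the monomial `ν`. -/
def MonPrec (μ ν : Mon) : Prop :=
  ∃ φ : ℕ → ℕ, StrictMono φ ∧ Finsupp.mapDomain (Sum.map φ φ) μ ≤ ν

/-- `μ` is the weight of `f`: the `≤`-greatest monomial of `f` with nonzero
coefficient in the reflected lexicographic order. -/
def IsWt (f : MvPolynomial (ℕ ⊕ ℕ) K) (μ : Mon) : Prop :=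
  MvPolynomial.coeff μ f ≠ 0 ∧ ∀ ν : Mon, MvPolynomial.coeff ν f ≠ 0 → MonLE ν μ

/-- The T-ideal of the free bicommutative algebra `F ≅ G` of countable rank
generated by a set: the smallest two-sided ideal containing it which is invariant
under all (`K`-linear, multiplicative) endomorphisms of the algebra. -/
noncomputable def TIdealGen (T : Set (GA K ℕ)) : Submodule K (GA K ℕ) :=
  sInf {I : Submodule K (GA K ℕ) | IsTwoSidedIdeal K ℕ I ∧ T ⊆ ↑I ∧
    ∀ e : GA K ℕ →ₗ[K] GA K ℕ, (∀ a b : GA K ℕ, e (a * b) = e a * e b) →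
      ∀ x ∈ I, e x ∈ I}

/-! Renaming the generators by the strictly increasing `φ` witnessing `μ ≼ ν` is an
endomorphism of `G`, and it sends the weight `μ` of `f` to a divisor `μ'` of `ν`. Multiplying by
generators on the left and on the right multiplies the image in `G²` by `y_i` resp. `z_j`, so the
T-ideal contains an element whose image is `(ν / μ') · φ(f)`. A strictly increasing renaming and
multiplication by a monomial both preserve the reflected lexicographic order, so this element
has weight `ν`. -/

section Renaming

variable {K ι} {κ : Type}

lemma rename_mem_Vid (φ : ι → κ) {p : MvPolynomial (ι ⊕ ι) K} (hp : p ∈ Vid K ι) :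
    rename (Sum.map φ φ) p ∈ Vid K κ := by
  have hle : Vid K ι ≤ (Vid K κ).comap (rename (Sum.map φ φ)) := by
    refine Ideal.span_le.2 ?_
    rintro _ ⟨i, j, rfl⟩
    exact Ideal.subset_span ⟨φ i, φ j, by simp⟩
  exact hle hp

noncomputable def renameVid (φ : ι → κ) : Vid K ι →ₗ[K] Vid K κ :=
  (rename (Sum.map φ φ) : MvPolynomial (ι ⊕ ι) K →ₐ[K] _).toLinearMap.restrict
    (p := (Vid K ι).restrictScalars K) (q := (Vid K κ).restrictScalars K)
    fun _ hp => rename_mem_Vid φ hp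

noncomputable def renameHom (φ : ι → κ) : GA K ι →ₗ[K] GA K κ :=
  (Finsupp.lmapDomain K K φ).prodMap (renameVid φ)

lemma renameHom_fst (φ : ι → κ) (u : GA K ι) : (renameHom φ u).1 = u.1.mapDomain φ := rfl

lemma coe_renameHom_snd (φ : ι → κ) (u : GA K ι) :
    ((renameHom φ u).2 : MvPolynomial (κ ⊕ κ) K) = rename (Sum.map φ φ) (u.2 : _) := rfl

lemma fst_mul (u v : GA K ι) : (u * v).1 = 0 := rfl

lemma coe_snd_mul (u v : GA K ι) : ((u * v).2 : MvPolynomial (ι ⊕ ι) K) =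
    (Yp K ι u.1 + (u.2 : MvPolynomial (ι ⊕ ι) K)) * (Zp K ι v.1 + (v.2 : _)) := rfl

lemma rename_Yp (φ : ι → κ) (a : ι →₀ K) :
    rename (Sum.map φ φ) (Yp K ι a) = Yp K κ (a.mapDomain φ) := by
  rw [Yp, Yp, map_finsuppSum,
    Finsupp.sum_mapDomain_index (by simp) (fun _ _ _ => by rw [map_add, add_mul])]
  simp [rename_X]

lemma rename_Zp (φ : ι → κ) (b : ι →₀ K) :
    rename (Sum.map φ φ) (Zp K ι b) = Zp K κ (b.mapDomain φ) := by
  rw [Zp, Zp, map_finsuppSum,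
    Finsupp.sum_mapDomain_index (by simp) (fun _ _ _ => by rw [map_add, add_mul])]
  simp [rename_X]

lemma renameHom_mul (φ : ι → κ) (u v : GA K ι) :
    renameHom φ (u * v) = renameHom φ u * renameHom φ v := by
  refine Prod.ext (by simp [renameHom_fst, fst_mul]) (Subtype.ext ?_)
  rw [coe_renameHom_snd, coe_snd_mul, coe_snd_mul, map_mul, map_add, map_add, rename_Yp,
    rename_Zp, renameHom_fst, renameHom_fst, coe_renameHom_snd, coe_renameHom_snd]

end Renaming

section Ideals

variable {K ι}

lemma fst_eq_zero_of_mem_Gsq {w : GA K ι} (hw : w ∈ Gsq K ι) : w.1 = 0 := by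
  have hle : Gsq K ι ≤ LinearMap.ker (LinearMap.fst K (ι →₀ K) (Vid K ι)) := by
    rw [Gsq, Submodule.span_le]
    rintro _ ⟨u, v, rfl⟩
    exact fst_mul u v
  exact hle hw

lemma coe_snd_xE_mul (i : ι) {w : GA K ι} (hw : w.1 = 0) :
    ((xE K ι i * w).2 : MvPolynomial (ι ⊕ ι) K) =
      X (Sum.inl i) * (w.2 : MvPolynomial (ι ⊕ ι) K) := by
  simp [coe_snd_mul, hw, xE, Yp, Zp]

lemma coe_snd_mul_xE (j : ι) {w : GA K ι} (hw : w.1 = 0) :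
    ((w * xE K ι j).2 : MvPolynomial (ι ⊕ ι) K) =
      (w.2 : MvPolynomial (ι ⊕ ι) K) * X (Sum.inr j) := by
  simp [coe_snd_mul, hw, xE, Yp, Zp]

lemma IsTwoSidedIdeal.exists_coe_snd_eq_mul {I : Submodule K (GA K ι)}
    (hI : IsTwoSidedIdeal K ι I) {w : GA K ι} (hwI : w ∈ I) (hw : w.1 = 0)
    (q : MvPolynomial (ι ⊕ ι) K) :
    ∃ h ∈ I, h.1 = 0 ∧ (h.2 : MvPolynomial (ι ⊕ ι) K) = q * w.2 := by
  induction q using MvPolynomial.induction_on with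
  | C c => exact ⟨c • w, I.smul_mem c hwI, by simp [hw], by simp [smul_eq_C_mul]⟩
  | add p q hp hq =>
    obtain ⟨h, hhI, hh1, hh2⟩ := hp
    obtain ⟨h', hh'I, hh'1, hh'2⟩ := hq
    exact ⟨h + h', I.add_mem hhI hh'I, by simp [hh1, hh'1], by simp [hh2, hh'2, add_mul]⟩
  | mul_X p a hp =>
    obtain ⟨h, hhI, hh1, hh2⟩ := hp
    cases a with
    | inl i =>
      refine ⟨xE K ι i * h, (hI _ h hhI).1, fst_mul _ _, ?_⟩
      rw [coe_snd_xE_mul i hh1, hh2]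
      ring
    | inr j =>
      refine ⟨h * xE K ι j, (hI _ h hhI).2, fst_mul _ _, ?_⟩
      rw [coe_snd_mul_xE j hh1, hh2]
      ring

end Ideals

section TIdeal

variable {K}

lemma subset_TIdealGen (T : Set (GA K ℕ)) : T ⊆ TIdealGen K T :=
  fun _ hx => Submodule.mem_sInf.2 fun _ hI => hI.2.1 hx

lemma isTwoSidedIdeal_TIdealGen (T : Set (GA K ℕ)) : IsTwoSidedIdeal K ℕ (TIdealGen K T) :=
  fun a x hx => ⟨Submodule.mem_sInf.2 fun I hI => (hI.1 a x (Submodule.mem_sInf.1 hx I hI)).1,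
    Submodule.mem_sInf.2 fun I hI => (hI.1 a x (Submodule.mem_sInf.1 hx I hI)).2⟩

lemma map_mem_TIdealGen {T : Set (GA K ℕ)} (e : GA K ℕ →ₗ[K] GA K ℕ)
    (he : ∀ a b, e (a * b) = e a * e b) {x : GA K ℕ} (hx : x ∈ TIdealGen K T) :
    e x ∈ TIdealGen K T :=
  Submodule.mem_sInf.2 fun I hI => hI.2.2 e he x (Submodule.mem_sInf.1 hx I hI)

end TIdeal

section Weights

variable {K}

lemma exists_lt_of_reindex {φ : ℕ → ℕ} (hφ : StrictMono φ) {a b a' b' : ℕ → ℕ}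
    (ha : ∀ k, a' (φ k) = a k) (hb : ∀ k, b' (φ k) = b k)
    (hout : ∀ j ∉ Set.range φ, a' j = b' j)
    (h : ∃ i, a i < b i ∧ ∀ j, i < j → a j = b j) :
    ∃ i, a' i < b' i ∧ ∀ j, i < j → a' j = b' j := by
  obtain ⟨i, hlt, habove⟩ := h
  refine ⟨φ i, by rwa [ha, hb], fun j hj => ?_⟩
  by_cases hr : j ∈ Set.range φ
  · obtain ⟨k, rfl⟩ := hr
    rw [ha, hb]
    exact habove k (hφ.lt_iff_lt.1 hj)
  · exact hout j hr

lemma MonLT.mapDomain {φ : ℕ → ℕ} (hφ : StrictMono φ) {u v : Mon} (h : MonLT u v) :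
    MonLT (u.mapDomain (Sum.map φ φ)) (v.mapDomain (Sum.map φ φ)) := by
  have hmap (w : Mon) (x : ℕ ⊕ ℕ) : w.mapDomain (Sum.map φ φ) (Sum.map φ φ x) = w x :=
    Finsupp.mapDomain_apply (Sum.map_injective.2 ⟨hφ.injective, hφ.injective⟩) w x
  have hinl (w : Mon) (j : ℕ) (hj : j ∉ Set.range φ) :
      w.mapDomain (Sum.map φ φ) (Sum.inl j) = 0 :=
    Finsupp.mapDomain_of_notMem_range _ _ fun ⟨x, hx⟩ => by cases x <;> simp_all
  have hinr (w : Mon) (j : ℕ) (hj : j ∉ Set.range φ) :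
      w.mapDomain (Sum.map φ φ) (Sum.inr j) = 0 :=
    Finsupp.mapDomain_of_notMem_range _ _ fun ⟨x, hx⟩ => by cases x <;> simp_all
  rcases h with h | ⟨hall, h⟩
  · exact Or.inl <| exists_lt_of_reindex hφ (fun k => hmap u (.inl k)) (fun k => hmap v (.inl k))
      (fun j hj => by rw [hinl u j hj, hinl v j hj]) h
  · refine Or.inr ⟨fun j => ?_, exists_lt_of_reindex hφ (fun k => hmap u (.inr k))
      (fun k => hmap v (.inr k)) (fun j hj => by rw [hinr u j hj, hinr v j hj]) h⟩
    by_cases hj : j ∈ Set.range φ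
    · obtain ⟨k, rfl⟩ := hj
      exact (hmap u (.inl k)).trans ((hall k).trans (hmap v (.inl k)).symm)
    · rw [hinl u j hj, hinl v j hj]

lemma MonLE.mapDomain {φ : ℕ → ℕ} (hφ : StrictMono φ) {u v : Mon} (h : MonLE u v) :
    MonLE (u.mapDomain (Sum.map φ φ)) (v.mapDomain (Sum.map φ φ)) := by
  rcases h with h | rfl
  · exact Or.inl (h.mapDomain hφ)
  · exact Or.inr rfl

lemma MonLE.add_left (d : Mon) {u v : Mon} (h : MonLE u v) : MonLE (d + u) (d + v) := by
  rcases h with (⟨i, hlt, heq⟩ | ⟨hall, i, hlt, heq⟩) | rfl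
  · exact Or.inl <| Or.inl ⟨i, by simpa using hlt, fun j hj => by simp [heq j hj]⟩
  · exact Or.inl <| Or.inr ⟨fun j => by simp [hall j],
      i, by simpa using hlt, fun j hj => by simp [heq j hj]⟩
  · exact Or.inr rfl

lemma IsWt.rename {φ : ℕ → ℕ} (hφ : StrictMono φ) {p : MvPolynomial (ℕ ⊕ ℕ) K} {μ : Mon}
    (h : IsWt K p μ) :
    IsWt K (rename (Sum.map φ φ) p) (μ.mapDomain (Sum.map φ φ)) := by
  have hinj : Function.Injective (Sum.map φ φ) :=
    Sum.map_injective.2 ⟨hφ.injective, hφ.injective⟩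
  refine ⟨by rw [coeff_rename_mapDomain _ hinj]; exact h.1, fun κ hκ => ?_⟩
  obtain ⟨ρ, rfl, hρ⟩ := coeff_rename_ne_zero _ _ _ hκ
  exact (h.2 ρ hρ).mapDomain hφ

lemma IsWt.monomial_one_mul (d : Mon) {p : MvPolynomial (ℕ ⊕ ℕ) K} {μ : Mon}
    (h : IsWt K p μ) : IsWt K (monomial d 1 * p) (d + μ) := by
  refine ⟨by rw [coeff_monomial_mul, one_mul]; exact h.1, fun κ hκ => ?_⟩
  rw [coeff_monomial_mul'] at hκ
  split_ifs at hκ with hdκ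
  · rw [one_mul] at hκ
    simpa only [add_tsub_cancel_of_le hdκ] using (h.2 _ hκ).add_left d
  · exact absurd rfl hκ

end Weights

theorem key_lemma_weights (f : GA K ℕ) (hf : f ∈ Gsq K ℕ)
    (μ ν : Mon)
    (hμ : IsWt K ((f.2 : MvPolynomial (ℕ ⊕ ℕ) K)) μ)
    (hprec : MonPrec μ ν) :
    ∃ h ∈ TIdealGen K {f}, IsWt K ((h.2 : MvPolynomial (ℕ ⊕ ℕ) K)) ν := by
  obtain ⟨φ, hφ, hle⟩ := hprec
  have hφf : renameHom φ f ∈ TIdealGen K {f} :=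
    map_mem_TIdealGen _ (renameHom_mul φ) (subset_TIdealGen _ rfl)
  have hφf1 : (renameHom φ f).1 = 0 := by
    rw [renameHom_fst, fst_eq_zero_of_mem_Gsq hf, Finsupp.mapDomain_zero]
  obtain ⟨h, hmem, -, hh⟩ := (isTwoSidedIdeal_TIdealGen _).exists_coe_snd_eq_mul hφf hφf1
    (monomial (ν - μ.mapDomain (Sum.map φ φ)) 1)
  refine ⟨h, hmem, ?_⟩
  rw [hh, coe_renameHom_snd]
  have hwt := (hμ.rename hφ).monomial_one_mul (ν - μ.mapDomain (Sum.map φ φ))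
  rwa [tsub_add_cancel_of_le hle] at hwt
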